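/- arXiv:2012.10146 — 2 statements merged into one kernel-verified Lean document; each statement's English description precedes it below -/
import Mathlib

section
/- Under the Tenderstake reward scheme, the total reward a player i can receive by attempting to decide on a single value together with identifying deviators is strictly less than 2 · s_i^1 · R^1: the per-decision reward s_i^1·R^1 plus a slash bonus strictly bounded by s_i^1·R^1. -/
/-! Since the deviators identified at different heights are disjoint, the cumulative slash
fraction is the weight of a single subset of `P`; that subset misses the honest player `i`, whose
weight is positive, so the fraction is `< ∑ j ∈ P, g j = 1`. -/

open Finset

theorem Finset.sum_sum_lt_sum_of_pairwiseDisjoint {ι κ M : Type*} [AddCommMonoid M]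
    [PartialOrder M] [IsOrderedCancelAddMonoid M] {P : Finset ι} {g : ι → M} {i : ι}
    (hi : i ∈ P) (hgi : 0 < g i) (hg : ∀ j ∈ P, 0 ≤ g j) {s : Finset κ} {t : κ → Finset ι}
    (hdisj : (s : Set κ).PairwiseDisjoint t) (hsub : ∀ k ∈ s, t k ⊆ P)
    (hnot : ∀ k ∈ s, i ∉ t k) :
    ∑ k ∈ s, ∑ j ∈ t k, g j < ∑ j ∈ P, g j := by
  classical
  rw [← sum_biUnion hdisj]
  refine sum_lt_sum_of_subset (biUnion_subset.mpr hsub) hi ?_ hgi fun j hj _ ↦ hg j hj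
  simpa only [mem_biUnion, not_exists, not_and] using hnot

/-- Total reward for deciding a value plus cumulative slash bonus is
strictly less than 2 · s_i^1 · R^1. -/
theorem stmt_6 {ι : Type*} (P : Finset ι) (g : ι → ℝ)
    (i : ι) (hiP : i ∈ P)
    (hgsum : ∑ j ∈ P, g j = 1)
    (hgpos : ∀ j ∈ P, 0 < g j)
    (newDevs : ℕ → Finset ι)
    (hsub : ∀ H, newDevs H ⊆ P)
    (hdisj : ∀ H K, H ≠ K → Disjoint (newDevs H) (newDevs K))
    (hnoti : ∀ H, i ∉ newDevs H)
    (s1 R1 : ℝ) (hpos : 0 < s1 * R1) :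
    ∀ H : ℕ,
      s1 * R1 + ∑ k ∈ Finset.range H, s1 * R1 * (∑ j ∈ newDevs k, g j)
        < 2 * (s1 * R1) := by
  intro H
  have hbonus : ∑ k ∈ range H, ∑ j ∈ newDevs k, g j < 1 :=
    hgsum ▸ sum_sum_lt_sum_of_pairwiseDisjoint hiP (hgpos i hiP) (fun j hj ↦ (hgpos j hj).le)
      (fun a _ b _ hab ↦ hdisj a b hab) (fun k _ ↦ hsub k) (fun k _ ↦ hnoti k)
  rw [← mul_sum]
  linarith [mul_lt_of_lt_one_right hpos hbonus]
end

section
/- Monotonicity of adversarial share under slashing of only Byzantine players: if at every height the set of newly slashed deviators is contained in the Byzantine set B, and shares evolve by the Tenderstake slashing rule, then the total adversarial share s_A^H = Σ_{j ∈ B} s_j^H is non-increasing in H; in particular s_A^H ≤ s_A^1 for all H ≥ 1. -/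
/-! Slashing deviators of total share `σ`, all of them Byzantine, turns the adversarial share `a`
into `(a - σ) / (1 - σ)`, which is at most `a` because `a ≤ 1`. -/

open Finset

lemma sub_div_one_sub_le {K : Type*} [Field K] [LinearOrder K] [IsStrictOrderedRing K]
    {a σ : K} (hσ0 : 0 ≤ σ) (hσ1 : σ < 1) (ha : a ≤ 1) :
    (a - σ) / (1 - σ) ≤ a := by
  rw [div_le_iff₀ (sub_pos.mpr hσ1)]
  nlinarith

lemma sum_ite_mem_zero_div {ι K : Type*} [DecidableEq ι] [Field K] {B D : Finset ι}
    (hDB : D ⊆ B) (f : ι → K) (c : K) :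
    ∑ j ∈ B, (if j ∈ D then 0 else f j / c) = (∑ j ∈ B, f j - ∑ j ∈ D, f j) / c := by
  rw [sum_ite, sum_const_zero, zero_add, ← sum_div, filter_not, filter_mem_eq_inter,
    inter_eq_right.mpr hDB, sum_sdiff_eq_sub hDB]

/-- Lemma 7.6 core: if only Byzantine players are ever slashed, the total
adversarial share is non-increasing; in particular it never exceeds its
initial value. -/
theorem stmt_16 {ι : Type*} [DecidableEq ι] (P B : Finset ι) (hBP : B ⊆ P)
    (s : ℕ → ι → ℝ) (D : ℕ → Finset ι) (σ : ℕ → ℝ)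
    (hDB : ∀ H, D H ⊆ B)
    (hσ : ∀ H, σ H = ∑ j ∈ D H, s H j)
    (hσ1 : ∀ H, σ H < 1)
    (hnn : ∀ H, ∀ j ∈ P, 0 ≤ s H j)
    (hsum : ∀ H, ∑ j ∈ P, s H j = 1)
    (hupd : ∀ H, ∀ j, s (H + 1) j = if j ∈ D H then 0 else s H j / (1 - σ H)) :
    (∀ H, ∑ j ∈ B, s (H + 1) j ≤ ∑ j ∈ B, s H j) ∧
      (∀ H, ∑ j ∈ B, s H j ≤ ∑ j ∈ B, s 0 j) := by
  have step : ∀ H, ∑ j ∈ B, s (H + 1) j ≤ ∑ j ∈ B, s H j := fun H => by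
    have hσ0 : 0 ≤ σ H := hσ H ▸ sum_nonneg fun j hj => hnn H j (hBP (hDB H hj))
    have hB1 : ∑ j ∈ B, s H j ≤ 1 :=
      hsum H ▸ sum_le_sum_of_subset_of_nonneg hBP fun j hj _ => hnn H j hj
    calc ∑ j ∈ B, s (H + 1) j = (∑ j ∈ B, s H j - σ H) / (1 - σ H) := by
          simp_rw [hupd H, sum_ite_mem_zero_div (hDB H), hσ H]
      _ ≤ ∑ j ∈ B, s H j := sub_div_one_sub_le hσ0 (hσ1 H) hB1
  exact ⟨step, fun H =>
    antitone_nat_of_succ_le (f := fun H => ∑ j ∈ B, s H j) step (Nat.zero_le H)⟩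
end
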